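/- Let γ ∈ [0,1] and define R_PNU = γ·R_PN + (1-γ)·(R_PU + R_NU - 1/2), where R_PN, R_PU, R_NU are the pairwise ranking risks with unlabeled distribution p_u = π p_+ + (1-π) p_- as above (zero-one loss, no ties). Then R_PNU = R_PN; i.e., the semi-supervised AUC risk is an unbiased estimator of the positive-negative AUC risk for every γ. -/
import Mathlib


open MeasureTheory
open scoped ENNReal

/-- The zero-one ranking loss `l₀₁(u,v) = (1 - sign(u - v))/2`. -/
noncomputable def l01 (u v : ℝ) : ℝ := (1 - Real.sign (u - v)) / 2

lemma measurable_realSign : Measurable Real.sign := by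
  have : Real.sign = fun x : ℝ => if x < 0 then (-1 : ℝ) else if 0 < x then 1 else 0 := by
    funext x; rfl
  rw [this]
  exact Measurable.ite (measurableSet_lt measurable_id measurable_const) measurable_const
    (Measurable.ite (measurableSet_lt measurable_const measurable_id) measurable_const
      measurable_const)

lemma l01_abs_le (u v : ℝ) : ‖l01 u v‖ ≤ 1 := by
  have h := Real.sign_apply_eq (u - v)
  rcases h with h | h | h <;> simp [l01, h, abs_le] <;> norm_num

lemma l01_meas {α : Type*} [MeasurableSpace α] {f : α → ℝ} (hf : Measurable f) :
    Measurable (fun z : α × α => l01 (f z.1) (f z.2)) := by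
  unfold l01
  exact ((measurable_const.sub
    (measurable_realSign.comp ((hf.comp measurable_fst).sub (hf.comp measurable_snd)))).div
    measurable_const)

lemma l01_integrable {α : Type*} [MeasurableSpace α] {f : α → ℝ} (hf : Measurable f)
    (μ : Measure (α × α)) [IsFiniteMeasure μ] :
    Integrable (fun z : α × α => l01 (f z.1) (f z.2)) μ := by
  apply (integrable_const (1 : ℝ)).mono' (l01_meas hf).aestronglyMeasurable
  exact Filter.Eventually.of_forall fun z => l01_abs_le _ _

lemma l01_add {u v : ℝ} (h : u ≠ v) : l01 u v + l01 v u = 1 := by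
  have hs : Real.sign (v - u) = - Real.sign (u - v) := by
    rw [← Real.sign_neg]; ring_nf
  unfold l01
  rw [hs]; ring

lemma integral_l01_self {α : Type*} [MeasurableSpace α] {f : α → ℝ} (hf : Measurable f)
    (μ : Measure α) [IsProbabilityMeasure μ]
    (h0 : (μ.prod μ) {z | f z.1 = f z.2} = 0) :
    ∫ z, l01 (f z.1) (f z.2) ∂(μ.prod μ) = 1 / 2 := by
  have hswap : ∫ z, l01 (f z.2) (f z.1) ∂(μ.prod μ)
      = ∫ z, l01 (f z.1) (f z.2) ∂(μ.prod μ) := by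
    exact MeasureTheory.integral_prod_swap (fun z : α × α => l01 (f z.1) (f z.2))
  have hae : ∀ᵐ z ∂(μ.prod μ), l01 (f z.1) (f z.2) + l01 (f z.2) (f z.1) = 1 := by
    filter_upwards [measure_eq_zero_iff_ae_notMem.mp h0] with z hz
    exact l01_add hz
  have hint := l01_integrable hf (μ.prod μ)
  have hint2 : Integrable (fun z : α × α => l01 (f z.2) (f z.1)) (μ.prod μ) := by
    apply (integrable_const (1 : ℝ)).mono'
    · exact ((l01_meas hf).comp measurable_swap).aestronglyMeasurable
    · exact Filter.Eventually.of_forall fun z => l01_abs_le _ _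
  have hsum : ∫ z, (l01 (f z.1) (f z.2) + l01 (f z.2) (f z.1)) ∂(μ.prod μ) = 1 := by
    rw [integral_congr_ae hae]; simp
  rw [integral_add hint hint2, hswap] at hsum
  linarith

lemma prod_smul_right {α β : Type*} [MeasurableSpace α] [MeasurableSpace β]
    (μ : Measure α) (ν : Measure β) [SigmaFinite μ] [IsFiniteMeasure ν]
    (c : ℝ≥0∞) (hc : c ≠ ⊤) : μ.prod (c • ν) = c • μ.prod ν := by
  have : IsFiniteMeasure (c • ν) := by
    constructor
    simp only [Measure.smul_apply, smul_eq_mul]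
    exact ENNReal.mul_lt_top hc.lt_top (measure_lt_top ν _)
  refine Measure.prod_eq fun s t hs ht => ?_
  simp only [Measure.smul_apply, smul_eq_mul, Measure.prod_prod]
  ring

lemma prod_smul_left {α β : Type*} [MeasurableSpace α] [MeasurableSpace β]
    (μ : Measure α) (ν : Measure β) [IsFiniteMeasure μ] [SigmaFinite ν]
    (c : ℝ≥0∞) (hc : c ≠ ⊤) : (c • μ).prod ν = c • μ.prod ν := by
  have : IsFiniteMeasure (c • μ) := by
    constructor
    simp only [Measure.smul_apply, smul_eq_mul]
    exact ENNReal.mul_lt_top hc.lt_top (measure_lt_top μ _)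
  refine Measure.prod_eq fun s t hs ht => ?_
  simp only [Measure.smul_apply, smul_eq_mul, Measure.prod_prod]
  ring

theorem pnu_risk_unbiased {d : ℕ}
    (pPos pNeg : Measure (Fin d → ℝ))
    [IsProbabilityMeasure pPos] [IsProbabilityMeasure pNeg]
    (π : ℝ) (hπ : π ∈ Set.Ioo (0 : ℝ) 1)
    (γ : ℝ) (hγ : γ ∈ Set.Icc (0 : ℝ) 1)
    (f : (Fin d → ℝ) → ℝ) (hf : Measurable f)
    (hPN : (pPos.prod pNeg) {z | f z.1 = f z.2} = 0)
    (hPP : (pPos.prod pPos) {z | f z.1 = f z.2} = 0)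
    (hNN : (pNeg.prod pNeg) {z | f z.1 = f z.2} = 0)
    (pU : Measure (Fin d → ℝ))
    (hpU : pU = ENNReal.ofReal π • pPos + ENNReal.ofReal (1 - π) • pNeg)
    (RPN RPU RNU RPNU : ℝ)
    (hRPN : RPN = ∫ z, l01 (f z.1) (f z.2) ∂(pPos.prod pNeg))
    (hRPU : RPU = ∫ z, l01 (f z.1) (f z.2) ∂(pPos.prod pU))
    (hRNU : RNU = ∫ z, l01 (f z.1) (f z.2) ∂(pU.prod pNeg))
    (hRPNU : RPNU = γ * RPN + (1 - γ) * (RPU + RNU - 1 / 2)) :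
    RPNU = RPN := by
  obtain ⟨hπ0, hπ1⟩ := hπ
  have hπ' : (0:ℝ) ≤ 1 - π := by linarith
  have ht1 : (ENNReal.ofReal π) ≠ ⊤ := ENNReal.ofReal_ne_top
  have ht2 : (ENNReal.ofReal (1 - π)) ≠ ⊤ := ENNReal.ofReal_ne_top
  -- decompose RPU
  have hPU : RPU = π * (1/2) + (1 - π) * RPN := by
    rw [hRPU, hpU, Measure.prod_add, prod_smul_right _ _ _ ht1, prod_smul_right _ _ _ ht2,
      integral_add_measure, integral_smul_measure, integral_smul_measure,
      ENNReal.toReal_ofReal hπ0.le, ENNReal.toReal_ofReal hπ',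
      integral_l01_self hf pPos hPP, ← hRPN]
    · simp [smul_eq_mul]
    · exact (l01_integrable hf _).smul_measure ht1
    · exact (l01_integrable hf _).smul_measure ht2
  have hNU : RNU = π * RPN + (1 - π) * (1/2) := by
    rw [hRNU, hpU, Measure.add_prod, prod_smul_left _ _ _ ht1, prod_smul_left _ _ _ ht2,
      integral_add_measure, integral_smul_measure, integral_smul_measure,
      ENNReal.toReal_ofReal hπ0.le, ENNReal.toReal_ofReal hπ',
      integral_l01_self hf pNeg hNN, ← hRPN]
    · simp [smul_eq_mul]
    · exact (l01_integrable hf _).smul_measure ht1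
    · exact (l01_integrable hf _).smul_measure ht2
  rw [hRPNU, hPU, hNU]; ring
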